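/- arXiv:1811.01849 — 2 statements merged into one kernel-verified Lean document; each statement's English description precedes it below -/
import Mathlib

section
/- Let x : [0,∞) → ℝ be continuous with x(0) ≥ 0. There exists a unique pair (z, ℓ) of continuous functions such that: z = x + ℓ, z(t) ≥ 0 for all t, ℓ is nondecreasing with ℓ(0) = 0, and ℓ increases only when z = 0 (i.e. ∫₀^∞ 1_{z(s) > 0} dℓ(s) = 0). Moreover ℓ(t) = −min(0, inf_{s∈[0,t]} x(s)) = sup_{s∈[0,t]} max(0, −x(s)). -/
/-!
The regulator is the running maximum `ℓ(t) = sup_{[0,t]} max(0, -x)`. It is the least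
nonnegative nondecreasing function with `x + ℓ ≥ 0`, and it only increases at times where the
maximum is attained, i.e. where `x + ℓ = 0`. Conversely, any other regulator `ℓ'` is constant on
every interval on which it exceeds `ℓ` (there `x + ℓ' > x + ℓ ≥ 0`); starting from
`ℓ'(0) = 0 ≤ ℓ(0)` it can therefore never overtake the continuous nondecreasing `ℓ`.
-/

open Set Filter Topology

noncomputable def runningSup (f : ℝ → ℝ) (t : ℝ) : ℝ := sSup (f '' Icc 0 t)

section RunningSup

variable {f : ℝ → ℝ} {s t : ℝ}

theorem ContinuousOn.bddAbove_image_Icc (hf : ContinuousOn f (Ici 0)) (hs : 0 ≤ s) :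
    BddAbove (f '' Icc s t) :=
  isCompact_Icc.bddAbove_image (hf.mono fun _ hu => hs.trans hu.1)

theorem runningSup_zero : runningSup f 0 = f 0 := by
  simp [runningSup]

theorem le_runningSup (hf : ContinuousOn f (Ici 0)) {u : ℝ} (hu : u ∈ Icc 0 t) :
    f u ≤ runningSup f t :=
  le_csSup (hf.bddAbove_image_Icc le_rfl) (mem_image_of_mem f hu)

theorem runningSup_le_of_le {φ : ℝ → ℝ} (hφ : MonotoneOn φ (Ici 0))
    (hfφ : ∀ u, 0 ≤ u → f u ≤ φ u) (ht : 0 ≤ t) : runningSup f t ≤ φ t :=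
  csSup_le ((nonempty_Icc.2 ht).image f) <|
    forall_mem_image.2 fun u hu => (hfφ u hu.1).trans (hφ hu.1 ht hu.2)

theorem monotoneOn_runningSup (hf : ContinuousOn f (Ici 0)) :
    MonotoneOn (runningSup f) (Ici 0) := fun _ hs _ _ hst =>
  csSup_le_csSup (hf.bddAbove_image_Icc le_rfl) ((nonempty_Icc.2 hs).image f)
    (image_mono (Icc_subset_Icc_right hst))

theorem continuousOn_runningSup (hf : ContinuousOn f (Ici 0)) :
    ContinuousOn (runningSup f) (Ici 0) := by
  -- rescale `[0, t]` to `[0, 1]`, so that the supremum is over a fixed compact set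
  let F : ℝ → ℝ → ℝ := fun t s => f (max 0 (t * s))
  have hF : Continuous ↿F :=
    hf.comp_continuous (by fun_prop) fun _ => mem_Ici.2 (le_max_left _ _)
  refine ((isCompact_Icc (a := 0) (b := 1)).continuous_sSup hF).continuousOn.congr
    fun t (ht : 0 ≤ t) => ?_
  have hrescale : (fun s => max 0 (t * s)) '' Icc 0 1 = Icc 0 t := by
    rw [image_congr fun s hs => max_eq_right (mul_nonneg ht hs.1),
      image_mul_left_Icc ht zero_le_one, mul_zero, mul_one]
  simp only [runningSup, F, ← hrescale, image_image]

theorem runningSup_eq_max (hf : ContinuousOn f (Ici 0)) (hs : 0 ≤ s) (hst : s ≤ t) :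
    runningSup f t = max (runningSup f s) (sSup (f '' Icc s t)) := by
  rw [runningSup, ← Icc_union_Icc_eq_Icc hs hst, image_union,
    csSup_union (hf.bddAbove_image_Icc le_rfl) ((nonempty_Icc.2 hs).image f)
      (hf.bddAbove_image_Icc hs) ((nonempty_Icc.2 hst).image f)]
  rfl

theorem exists_eq_runningSup_of_lt (hf : ContinuousOn f (Ici 0)) (hs : 0 ≤ s) (hst : s ≤ t)
    (hlt : runningSup f s < runningSup f t) :
    ∃ v ∈ Icc s t, runningSup f s < f v ∧ f v = runningSup f v := by
  obtain ⟨v, hv, hsup⟩ := isCompact_Icc.exists_sSup_image_eq ⟨s, le_rfl, hst⟩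
    (hf.mono fun _ hu => hs.trans hu.1)
  rw [runningSup_eq_max hf hs hst, hsup] at hlt
  have hsv : runningSup f s < f v := by simpa using hlt
  have hvt : f v = runningSup f t := by
    rw [runningSup_eq_max hf hs hst, hsup, max_eq_right hsv.le]
  refine ⟨v, hv, hsv, le_antisymm (le_runningSup hf ⟨hs.trans hv.1, le_rfl⟩) ?_⟩
  exact hvt ▸ monotoneOn_runningSup hf (hs.trans hv.1) (hs.trans hst) hv.2

theorem runningSup_max_zero_neg {x : ℝ → ℝ} (hx : BddBelow (x '' Icc 0 t)) (ht : 0 ≤ t) :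
    runningSup (fun s => max 0 (-x s)) t = -min 0 (sInf (x '' Icc 0 t)) := by
  have hanti : Antitone fun a : ℝ => max 0 (-a) := fun _ _ hab =>
    max_le_max le_rfl (neg_le_neg hab)
  rw [← max_neg_neg, neg_zero, hanti.map_csInf_of_continuousAt (by fun_prop)
    ((nonempty_Icc.2 ht).image x) hx, image_image]
  rfl

end RunningSup

theorem le_of_flat_above {ℓ L : ℝ → ℝ} (hℓ : ContinuousOn ℓ (Ici 0))
    (hL : ContinuousOn L (Ici 0)) (hL_mono : MonotoneOn L (Ici 0)) (h₀ : ℓ 0 ≤ L 0)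
    (hflat : ∀ s t : ℝ, 0 ≤ s → s ≤ t → (∀ u ∈ Icc s t, L u < ℓ u) → ℓ t = ℓ s)
    {t : ℝ} (ht : 0 ≤ t) : ℓ t ≤ L t := by
  by_contra! hlt
  -- `r` is the last time in `[0, t]` at which `ℓ ≤ L`
  set A := {u ∈ Icc 0 t | ℓ u ≤ L u}
  have hA : IsClosed A :=
    isClosed_Icc.isClosed_le (hℓ.mono Icc_subset_Ici_self) (hL.mono Icc_subset_Ici_self)
  have hAbdd : BddAbove A := ⟨t, fun _ hu => hu.1.2⟩
  set r := sSup A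
  obtain ⟨⟨hr₀, hrt⟩, hrL⟩ : r ∈ A := hA.csSup_mem ⟨0, ⟨le_rfl, ht⟩, h₀⟩ hAbdd
  have hgt : ∀ u ∈ Ioc r t, L u < ℓ u := fun u hu => by
    by_contra! hle
    exact hu.1.not_ge (le_csSup hAbdd ⟨⟨hr₀.trans hu.1.le, hu.2⟩, hle⟩)
  have hrt' : r < t := hrt.lt_of_ne fun h => hlt.not_ge (h ▸ hrL)
  have hconst : ℓ =ᶠ[𝓝[>] r] fun _ => ℓ t := by
    filter_upwards [Ioc_mem_nhdsGT_of_mem ⟨le_rfl, hrt'⟩] with u hu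
    exact (hflat u t (hr₀.trans hu.1.le) hu.2 fun w hw => hgt w ⟨hu.1.trans_le hw.1, hw.2⟩).symm
  have hℓr : ℓ r = ℓ t := tendsto_nhds_unique
    ((hℓ r hr₀).mono (s := Ioi r) fun _ hu => hr₀.trans (le_of_lt hu)).tendsto
    (tendsto_const_nhds.congr' hconst.symm)
  exact hlt.not_ge <| calc
    ℓ t = ℓ r := hℓr.symm
    _ ≤ L r := hrL
    _ ≤ L t := hL_mono hr₀ ht hrt

section Skorokhod

variable {x : ℝ → ℝ} {s t : ℝ}

theorem continuousOn_max_zero_neg (hx : ContinuousOn x (Ici 0)) :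
    ContinuousOn (fun s => max 0 (-x s)) (Ici 0) := by
  fun_prop

theorem neg_le_runningSup_max_zero_neg (hx : ContinuousOn x (Ici 0)) (ht : 0 ≤ t) :
    -x t ≤ runningSup (fun s => max 0 (-x s)) t :=
  (le_max_right _ _).trans (le_runningSup (continuousOn_max_zero_neg hx) ⟨ht, le_rfl⟩)

theorem runningSup_max_zero_neg_eq_of_pos (hx : ContinuousOn x (Ici 0)) (hs : 0 ≤ s)
    (hst : s ≤ t) (hpos : ∀ u ∈ Icc s t, 0 < x u + runningSup (fun s => max 0 (-x s)) u) :
    runningSup (fun s => max 0 (-x s)) t = runningSup (fun s => max 0 (-x s)) s := by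
  have hg := continuousOn_max_zero_neg hx
  refine ((monotoneOn_runningSup hg hs (hs.trans hst) hst).eq_or_lt.resolve_right
    fun hlt => ?_).symm
  obtain ⟨v, hv, hsv, hvv⟩ := exists_eq_runningSup_of_lt hg hs hst hlt
  -- at a time where the running maximum is attained above its earlier value, `x + ℓ = 0`
  have hv_pos : 0 < max 0 (-x v) :=
    ((le_max_left _ _).trans (le_runningSup hg ⟨hs, le_rfl⟩)).trans_lt hsv
  have hxv : max 0 (-x v) = -x v :=
    max_eq_right (lt_max_iff.1 hv_pos |>.resolve_left (lt_irrefl 0)).le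
  linarith [hpos v hv]

theorem eq_runningSup_of_skorokhod {z ℓ : ℝ → ℝ} (hx : ContinuousOn x (Ici 0))
    (hℓ : ContinuousOn ℓ (Ici 0)) (hzx : ∀ t, 0 ≤ t → z t = x t + ℓ t)
    (hz : ∀ t, 0 ≤ t → 0 ≤ z t) (hℓ_mono : MonotoneOn ℓ (Ici 0)) (hℓ₀ : ℓ 0 = 0)
    (hflat : ∀ s t : ℝ, 0 ≤ s → s ≤ t → (∀ u ∈ Icc s t, 0 < z u) → ℓ t = ℓ s) (ht : 0 ≤ t) :
    ℓ t = runningSup (fun s => max 0 (-x s)) t := by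
  have hg := continuousOn_max_zero_neg hx
  have hℓ_nonneg : ∀ u, 0 ≤ u → 0 ≤ ℓ u := fun u hu => hℓ₀ ▸ hℓ_mono self_mem_Ici hu hu
  refine le_antisymm (le_of_flat_above hℓ (continuousOn_runningSup hg) (monotoneOn_runningSup hg)
    ?_ (fun s t hs hst hlt => hflat s t hs hst fun u hu => ?_) ht) ?_
  · rw [hℓ₀, runningSup_zero]
    exact le_max_left _ _
  · rw [hzx u (hs.trans hu.1)]
    linarith [hlt u hu, neg_le_runningSup_max_zero_neg hx (hs.trans hu.1)]
  · refine runningSup_le_of_le hℓ_mono (fun u hu => max_le (hℓ_nonneg u hu) ?_) ht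
    linarith [hz u hu, hzx u hu]

end Skorokhod

/-- The deterministic Skorokhod reflection lemma at level 0: for continuous
`x : [0,∞) → ℝ` with `x 0 ≥ 0`, there is a pair `(z, ℓ)` with `z = x + ℓ`, `z ≥ 0`,
`ℓ` nondecreasing continuous with `ℓ 0 = 0` increasing only when `z = 0`; it is
unique on `[0,∞)`, and `ℓ(t) = −min(0, inf_{s∈[0,t]} x(s)) = sup_{s∈[0,t]} max(0, −x(s))`. -/
theorem skorokhod_reflection_lemma
    (x : ℝ → ℝ) (hx : ContinuousOn x (Set.Ici 0)) (hx0 : 0 ≤ x 0) :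
    ∃ z ℓ : ℝ → ℝ,
      (ContinuousOn z (Set.Ici 0) ∧ ContinuousOn ℓ (Set.Ici 0) ∧
        (∀ t, 0 ≤ t → z t = x t + ℓ t) ∧
        (∀ t, 0 ≤ t → 0 ≤ z t) ∧
        MonotoneOn ℓ (Set.Ici 0) ∧ ℓ 0 = 0 ∧
        (∀ s t : ℝ, 0 ≤ s → s ≤ t → (∀ u ∈ Set.Icc s t, 0 < z u) → ℓ t = ℓ s)) ∧
      (∀ z' ℓ' : ℝ → ℝ,
        (ContinuousOn z' (Set.Ici 0) ∧ ContinuousOn ℓ' (Set.Ici 0) ∧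
          (∀ t, 0 ≤ t → z' t = x t + ℓ' t) ∧
          (∀ t, 0 ≤ t → 0 ≤ z' t) ∧
          MonotoneOn ℓ' (Set.Ici 0) ∧ ℓ' 0 = 0 ∧
          (∀ s t : ℝ, 0 ≤ s → s ≤ t → (∀ u ∈ Set.Icc s t, 0 < z' u) → ℓ' t = ℓ' s)) →
        ∀ t, 0 ≤ t → z' t = z t ∧ ℓ' t = ℓ t) ∧
      (∀ t, 0 ≤ t →
        ℓ t = -min 0 (sInf (x '' Set.Icc 0 t)) ∧
        ℓ t = sSup ((fun s => max 0 (-x s)) '' Set.Icc 0 t)) := by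
  have hg := continuousOn_max_zero_neg hx
  set ℓ := runningSup (fun s => max 0 (-x s))
  have hz : ∀ t, 0 ≤ t → 0 ≤ x t + ℓ t := fun t ht => by
    linarith [neg_le_runningSup_max_zero_neg hx ht]
  have hℓ₀ : ℓ 0 = 0 := runningSup_zero.trans (max_eq_left (neg_nonpos.2 hx0))
  refine ⟨fun t => x t + ℓ t, ℓ, ⟨hx.add (continuousOn_runningSup hg),
    continuousOn_runningSup hg, fun _ _ => rfl, hz, monotoneOn_runningSup hg, hℓ₀,
    fun s t hs hst hpos => runningSup_max_zero_neg_eq_of_pos hx hs hst hpos⟩, ?_,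
    fun t ht => ⟨runningSup_max_zero_neg
      (isCompact_Icc.bddBelow_image (hx.mono Icc_subset_Ici_self)) ht, rfl⟩⟩
  rintro z' ℓ' ⟨-, hℓ', hzx', hz', hℓ'_mono, hℓ'₀, hflat'⟩ t ht
  have hℓ'_eq := eq_runningSup_of_skorokhod hx hℓ' hzx' hz' hℓ'_mono hℓ'₀ hflat' ht
  exact ⟨by rw [hzx' t ht, hℓ'_eq], hℓ'_eq⟩
end

section
/- Let b > 0 and let (l, r) satisfy: l(0) = r(0) = 0; l and r are Brownian motions with unit diffusion constant and drifts −b and +b respectively with respect to a common filtration; 1_{l(t)≠r(t)} d⟨l,r⟩_t = 0; and l(t) ≤ r(t) for all t ≥ 0. Set U(t) = (r(t)+l(t))/2 and V(t) = (r(t)−l(t))/2 − bt. Then U and V are continuous local martingales with ⟨U,V⟩ = 0, ⟨U⟩(t) = t − C(t) and ⟨V⟩(t) = C(t), where C(t) = t/2 − (1/2)∫₀^t 1_{l(s)=r(s)} d⟨l,r⟩_s. -/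
open MeasureTheory Set NNReal

/-- For a left-right sticky pair `(l,r)` started at the origin (encoded via Lévy-type
martingale characterizations w.r.t. a common filtration `ℱ`: `l + bt` and `r − bt` are
martingales with quadratic variation `t`, and `Q` is their covariation, which by the
sticky condition `1_{l≠r} d⟨l,r⟩ = 0` accrues only on `{l = r}`, so that
`C(t) = t/2 − (1/2)∫₀^t 1_{l=r} d⟨l,r⟩ = t/2 − Q(t)/2`), the processes
`U = (r+l)/2` and `V = (r−l)/2 − bt` are martingales with `⟨U,V⟩ = 0`,
`⟨U⟩(t) = t − C(t)` and `⟨V⟩(t) = C(t)`, i.e. `U`, `V`, `U·V`,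
`U² − (t − C)` and `V² − C` are all martingales. -/
theorem sticky_pair_orthogonal_martingales
    {Ω : Type*} {m : MeasurableSpace Ω} (P : Measure Ω) [IsProbabilityMeasure P]
    (ℱ : Filtration ℝ≥0 m) (b : ℝ) (hb : 0 < b)
    (l r Q : ℝ≥0 → Ω → ℝ)
    (hcont : ∀ᵐ ω ∂P, Continuous (fun t => l t ω) ∧ Continuous (fun t => r t ω))
    (hinit : ∀ᵐ ω ∂P, l 0 ω = 0 ∧ r 0 ω = 0)
    (horder : ∀ᵐ ω ∂P, ∀ t, l t ω ≤ r t ω)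
    -- `l` is a Brownian motion with drift `−b`: `l + bt` is a martingale with
    -- quadratic variation `t`, and similarly for `r` with drift `b`.
    (hmartL : Martingale (fun t ω => l t ω + b * t) ℱ P)
    (hmartR : Martingale (fun t ω => r t ω - b * t) ℱ P)
    (hqvL : Martingale (fun t ω => (l t ω + b * t) ^ 2 - t) ℱ P)
    (hqvR : Martingale (fun t ω => (r t ω - b * t) ^ 2 - t) ℱ P)
    -- `Q` is the covariation `⟨l,r⟩` of the martingale parts:
    (hQ0 : ∀ᵐ ω ∂P, Q 0 ω = 0)
    (hcov : Martingale (fun t ω => (l t ω + b * t) * (r t ω - b * t) - Q t ω) ℱ P)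
    -- sticky condition `1_{l(t)≠r(t)} d⟨l,r⟩_t = 0`: `Q` is flat off `{l = r}`,
    (hsticky : ∀ᵐ ω ∂P, ∀ s t : ℝ≥0, s ≤ t →
      (∀ u ∈ Set.Icc s t, l u ω ≠ r u ω) → Q t ω = Q s ω)
    -- so that `C(t) = t/2 − (1/2)∫₀^t 1_{l=r} d⟨l,r⟩ = t/2 − Q(t)/2`:
    (C U V : ℝ≥0 → Ω → ℝ)
    (hC : ∀ t ω, C t ω = (t : ℝ) / 2 - Q t ω / 2)
    (hU : ∀ t ω, U t ω = (r t ω + l t ω) / 2)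
    (hV : ∀ t ω, V t ω = (r t ω - l t ω) / 2 - b * t) :
    Martingale U ℱ P ∧ Martingale V ℱ P ∧
    Martingale (fun t ω => U t ω * V t ω) ℱ P ∧
    Martingale (fun t ω => (U t ω) ^ 2 - ((t : ℝ) - C t ω)) ℱ P ∧
    Martingale (fun t ω => (V t ω) ^ 2 - C t ω) ℱ P := by
  refine ⟨?_, ?_, ?_, ?_, ?_⟩
  · convert (hmartL.add hmartR).smul (1/2) using 1
    funext t ω
    simp only [Pi.smul_apply, Pi.add_apply, smul_eq_mul, hU]
    ring
  · convert (hmartR.sub hmartL).smul (1/2) using 1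
    funext t ω
    simp only [Pi.smul_apply, Pi.sub_apply, smul_eq_mul, hV]
    ring
  · convert (hqvR.sub hqvL).smul (1/4) using 1
    funext t ω
    simp only [Pi.smul_apply, Pi.sub_apply, smul_eq_mul, hU, hV]
    ring
  · convert ((hqvR.add hqvL).add (hcov.smul 2)).smul (1/4) using 1
    funext t ω
    simp only [Pi.smul_apply, Pi.add_apply, Pi.sub_apply, smul_eq_mul, hU, hC]
    ring
  · convert ((hqvR.add hqvL).sub (hcov.smul 2)).smul (1/4) using 1
    funext t ω
    simp only [Pi.smul_apply, Pi.add_apply, Pi.sub_apply, smul_eq_mul, hU, hV, hC]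
    ring
end
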